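/- For a connected graph Γ with n ≥ 2 vertices, the smallest distance eigenvalue δ_min satisfies δ_min > -2 if and only if δ_min = -1, which holds if and only if Γ is the complete graph K_n. -/

import Mathlib

open SimpleGraph Matrix Finset

/-- The distance matrix of a graph, with real entries. -/
noncomputable def distMatrix {V : Type*} [Fintype V] (G : SimpleGraph V) : Matrix V V ℝ :=
  Matrix.of fun x y => (G.dist x y : ℝ)

lemma distMatrix_isHermitian {V : Type*} [Fintype V] (G : SimpleGraph V) :
    (distMatrix G).IsHermitian := by
  ext x y
  simp [distMatrix, Matrix.conjTranspose_apply, SimpleGraph.dist_comm]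

/-- The multiset of eigenvalues (with multiplicity) of the distance matrix of `G`. -/
noncomputable def distSpec {V : Type*} [Fintype V] [DecidableEq V] (G : SimpleGraph V) :
    Multiset ℝ :=
  Finset.univ.val.map (distMatrix_isHermitian G).eigenvalues

/-!
Write `D` for the distance matrix. Since `δ_min` is the least eigenvalue, `D - δ_min I` is positive
semidefinite; testing it against `e_u - e_v` gives `δ_min ≤ -d(u, v)` for all `u ≠ v`. Hence
`δ_min ≤ -1` always, and `δ_min ≤ -2` as soon as two vertices are non-adjacent. For `K_n`,
`D + I` is the all-ones matrix, which is positive semidefinite, so `δ_min ≥ -1`.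
-/

open scoped ComplexOrder

namespace Matrix

variable {n : Type*} [Fintype n] [DecidableEq n]

lemma IsHermitian.posSemidef_sub_smul_one_iff {𝕜 : Type*} [RCLike 𝕜] {A : Matrix n n 𝕜}
    (hA : A.IsHermitian) (c : ℝ) :
    (A - (c : 𝕜) • 1).PosSemidef ↔ ∀ i, c ≤ hA.eigenvalues i := by
  have hshift : A - (c : 𝕜) • 1 = Unitary.conjStarAlgAut 𝕜 _ hA.eigenvectorUnitary
      (diagonal (RCLike.ofReal ∘ (hA.eigenvalues - fun _ => c))) := by
    conv_lhs => rw [hA.spectral_theorem]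
    rw [← map_one (Unitary.conjStarAlgAut 𝕜 _ hA.eigenvectorUnitary), ← map_smul, ← map_sub]
    congr 1
    ext i j
    by_cases h : i = j <;> simp [h, Algebra.algebraMap_eq_smul_one]
  rw [hshift, Unitary.conjStarAlgAut_apply,
    Unitary.isUnit_coe.posSemidef_star_right_conjugate_iff]
  simp [posSemidef_diagonal_iff, sub_nonneg]

lemma single_sub_single_dotProduct_mulVec {R : Type*} [CommRing R] (A : Matrix n n R) (u v : n) :
    (Pi.single u 1 - Pi.single v 1) ⬝ᵥ (A *ᵥ (Pi.single u 1 - Pi.single v 1)) =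
      A u u + A v v - A u v - A v u := by
  simp only [mulVec_sub, mulVec_single, MulOpposite.op_one, one_smul, dotProduct_sub,
    sub_dotProduct, single_dotProduct, col_apply, one_mul]
  ring

lemma single_sub_single_dotProduct_self {R : Type*} [CommRing R] {u v : n} (huv : u ≠ v) :
    (Pi.single u 1 - Pi.single v 1 : n → R) ⬝ᵥ (Pi.single u 1 - Pi.single v 1) = 2 := by
  norm_num [huv, huv.symm]

end Matrix

namespace SimpleGraph

variable {V : Type*}

lemma Connected.exists_two_le_dist_of_ne_top {G : SimpleGraph V} (hG : G.Connected)
    (hne : G ≠ ⊤) : ∃ u v, u ≠ v ∧ 2 ≤ G.dist u v := by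
  obtain ⟨u, v, huv, hnadj⟩ := ne_top_iff_exists_not_adj.mp hne
  have hpos := hG.pos_dist_of_ne huv
  have hne_one : G.dist u v ≠ 1 := fun h => hnadj (dist_eq_one_iff_adj.mp h)
  exact ⟨u, v, huv, by omega⟩

variable [Fintype V] [DecidableEq V]

lemma le_neg_dist_of_posSemidef {G : SimpleGraph V} {c : ℝ}
    (h : (distMatrix G - c • 1).PosSemidef) {u v : V} (huv : u ≠ v) :
    c ≤ -(G.dist u v : ℝ) := by
  have hform := h.dotProduct_mulVec_nonneg (Pi.single u 1 - Pi.single v 1)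
  rw [star_trivial, sub_mulVec, dotProduct_sub, smul_mulVec, one_mulVec, dotProduct_smul,
    single_sub_single_dotProduct_mulVec, single_sub_single_dotProduct_self huv] at hform
  simp only [distMatrix, of_apply, dist_self, dist_comm (u := v), Nat.cast_zero,
    smul_eq_mul] at hform
  linarith

lemma posSemidef_distMatrix_top_add_one : (distMatrix (⊤ : SimpleGraph V) + 1).PosSemidef := by
  convert posSemidef_vecMulVec_self_star (fun _ : V => (1 : ℝ)) using 1
  ext u v
  by_cases h : u = v
  · simp [h, distMatrix, vecMulVec_apply]
  · simp [h, distMatrix, dist_eq_one_iff_adj.mpr ((top_adj u v).mpr h), vecMulVec_apply]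

lemma neg_one_le_of_mem_distSpec_top {μ : ℝ} (hμ : μ ∈ distSpec (⊤ : SimpleGraph V)) :
    -1 ≤ μ := by
  obtain ⟨i, -, rfl⟩ := Multiset.mem_map.mp hμ
  refine ((distMatrix_isHermitian ⊤).posSemidef_sub_smul_one_iff (-1)).mp ?_ i
  simpa using posSemidef_distMatrix_top_add_one

end SimpleGraph

theorem dcube_stmt1 {V : Type*} [Fintype V] [DecidableEq V] (G : SimpleGraph V)
    (hn : 2 ≤ Fintype.card V) (hconn : G.Connected) (δmin : ℝ)
    (hmem : δmin ∈ distSpec G) (hmin : ∀ μ ∈ distSpec G, δmin ≤ μ) :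
    (-2 < δmin ↔ δmin = -1) ∧ (δmin = -1 ↔ G = ⊤) := by
  have hpsd : (distMatrix G - δmin • 1).PosSemidef := by
    simpa using ((distMatrix_isHermitian G).posSemidef_sub_smul_one_iff δmin).mpr
      fun i => hmin _ (Multiset.mem_map_of_mem _ (mem_univ_val i))
  have hle : δmin ≤ -1 := by
    obtain ⟨u, v, huv⟩ := Fintype.exists_pair_of_one_lt_card hn
    have : (1 : ℝ) ≤ G.dist u v := by exact_mod_cast hconn.pos_dist_of_ne huv
    linarith [le_neg_dist_of_posSemidef hpsd huv]
  by_cases htop : G = ⊤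
  · subst htop
    have hδ : δmin = -1 := le_antisymm hle (neg_one_le_of_mem_distSpec_top hmem)
    simp only [hδ, iff_true]
    norm_num
  · obtain ⟨u, v, huv, hdist⟩ := hconn.exists_two_le_dist_of_ne_top htop
    have : (2 : ℝ) ≤ G.dist u v := by exact_mod_cast hdist
    have hbound := le_neg_dist_of_posSemidef hpsd huv
    exact ⟨iff_of_false (by linarith) (by intro; linarith),
      iff_of_false (by intro; linarith) htop⟩
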